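/- arXiv:1811.07808 — 7 statements merged into one kernel-verified Lean document; each statement's English description precedes it below -/
import Mathlib

section
/- Let d ≥ 1 be an integer and let α, β ∈ ℝ satisfy α + β > d, α < d and β < d. Then there exists a constant C > 0 such that for every n ∈ ℤ^d one has ∑_{n₁ ∈ ℤ^d} ⟨n₁⟩^{-α} ⟨n − n₁⟩^{-β} ≤ C ⟨n⟩^{d − α − β}. -/
/-- Japanese bracket of a lattice point `n ∈ ℤ^d`: `⟨n⟩ = (1 + |n|²)^{1/2}`
where `|·|` is the Euclidean norm. -/
noncomputable def jb {d : ℕ} (n : Fin d → ℤ) : ℝ :=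
  Real.sqrt (1 + ∑ i, ((n i : ℝ)) ^ 2)

/-!
Cut `ℤ^d` into the dyadic shells `2^j ≤ ⟨m⟩ < 2^(j+1)`, each with `O(2^(jd))` points.
Since `⟨n⟩ ≤ 2 max(⟨n₁⟩, ⟨n - n₁⟩)`, the larger of the two levels is at least
`K = log₂⟨n⟩ - 1`; if it is the level of `n - n₁`, the summand is at most
`2^(-αj - β max(j, K))` with `j` the level of `n₁`, and symmetrically otherwise.
Weighted by the shell sizes, this decays geometrically in `|j - K|`, at rate `d - α` below `K`
and `α + β - d` above it, so the sum is `O(2^(-(α + β - d)K)) = O(⟨n⟩^(d - α - β))`.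
-/

open scoped ENNReal

variable {d : ℕ}

lemma jb_sq (n : Fin d → ℤ) : jb n ^ 2 = 1 + ∑ i, (n i : ℝ) ^ 2 :=
  Real.sq_sqrt (by positivity)

lemma one_le_jb (n : Fin d → ℤ) : 1 ≤ jb n :=
  Real.one_le_sqrt.2 (le_add_of_nonneg_right (by positivity))

lemma jb_pos (n : Fin d → ℤ) : 0 < jb n := one_pos.trans_le (one_le_jb n)

lemma abs_le_jb (n : Fin d → ℤ) (i : Fin d) : |(n i : ℝ)| ≤ jb n := by
  rw [← Real.sqrt_sq_eq_abs]
  refine Real.sqrt_le_sqrt ?_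
  have := Finset.single_le_sum (fun j _ ↦ sq_nonneg (n j : ℝ)) (Finset.mem_univ i)
  linarith

lemma jb_add_le_two_mul_max (x y : Fin d → ℤ) : jb (x + y) ≤ 2 * max (jb x) (jb y) := by
  have hsq : jb (x + y) ^ 2 ≤ 2 * jb x ^ 2 + 2 * jb y ^ 2 := by
    have : ∑ i, ((x i : ℝ) + y i) ^ 2 ≤ ∑ i, (2 * (x i : ℝ) ^ 2 + 2 * (y i : ℝ) ^ 2) :=
      Finset.sum_le_sum fun i _ ↦ by nlinarith [sq_nonneg ((x i : ℝ) - y i)]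
    simp only [jb_sq, Pi.add_apply, Int.cast_add, Finset.sum_add_distrib,
      ← Finset.mul_sum] at this ⊢
    linarith
  have hx := le_max_left (jb x) (jb y)
  have hy := le_max_right (jb x) (jb y)
  nlinarith [jb_pos x, jb_pos y, jb_pos (x + y)]

noncomputable def jbLevel (n : Fin d → ℤ) : ℕ := Nat.log 2 ⌊jb n⌋₊

lemma two_pow_jbLevel_le (n : Fin d → ℤ) : (2 : ℝ) ^ jbLevel n ≤ jb n :=
  calc (2 : ℝ) ^ jbLevel n ≤ ⌊jb n⌋₊ := by
        exact_mod_cast Nat.pow_log_le_self 2 (Nat.floor_pos.2 (one_le_jb n)).ne'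
    _ ≤ jb n := Nat.floor_le (jb_pos n).le

lemma jb_lt_two_pow_jbLevel_succ (n : Fin d → ℤ) : jb n < 2 ^ (jbLevel n + 1) :=
  calc jb n < ⌊jb n⌋₊ + 1 := Nat.lt_floor_add_one _
    _ ≤ 2 ^ (jbLevel n + 1) := by exact_mod_cast Nat.lt_pow_succ_log_self one_lt_two _

lemma jbLevel_add_le (x y : Fin d → ℤ) :
    jbLevel (x + y) ≤ max (jbLevel x) (jbLevel y) + 1 := by
  set m := max (jbLevel x) (jbLevel y)
  have hle : ∀ z : Fin d → ℤ, jbLevel z ≤ m → jb z < 2 ^ (m + 1) := fun z hz ↦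
    (jb_lt_two_pow_jbLevel_succ z).trans_le (pow_le_pow_right₀ one_le_two (by omega))
  have : (2 : ℝ) ^ jbLevel (x + y) < 2 ^ (m + 2) :=
    calc (2 : ℝ) ^ jbLevel (x + y) ≤ 2 * max (jb x) (jb y) :=
          (two_pow_jbLevel_le _).trans (jb_add_le_two_mul_max x y)
      _ < 2 * 2 ^ (m + 1) := by
          gcongr; exact max_lt (hle x (le_max_left _ _)) (hle y (le_max_right _ _))
      _ = 2 ^ (m + 2) := by ring
  have := (pow_lt_pow_iff_right₀ one_lt_two).1 this
  omega

lemma encard_jbLevel_fiber_le (j : ℕ) :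
    (jbLevel ⁻¹' {j} : Set (Fin d → ℤ)).encard ≤ ((2 ^ (j + 3)) ^ d : ℕ) := by
  set c : Fin d → ℤ := fun _ ↦ 2 ^ (j + 1)
  have hsub : jbLevel ⁻¹' {j} ⊆ (Finset.Icc (-c) c : Set (Fin d → ℤ)) := by
    intro m hm
    simp only [Finset.coe_Icc, Set.mem_Icc]
    refine forall_and.1 fun i ↦ ?_
    have h : |(m i : ℝ)| < 2 ^ (j + 1) :=
      (abs_le_jb m i).trans_lt (hm ▸ jb_lt_two_pow_jbLevel_succ m)
    have : |m i| ≤ 2 ^ (j + 1) := by exact_mod_cast h.le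
    exact abs_le.1 this
  have hcard : (Finset.Icc (-c) c).card = (2 ^ (j + 2) + 1) ^ d := by
    rw [Pi.card_Icc]
    have : (2 : ℤ) ^ (j + 1) + 1 - -2 ^ (j + 1) = ((2 ^ (j + 2) + 1 : ℕ) : ℤ) := by
      push_cast; ring
    simp only [c, Pi.neg_apply, Int.card_Icc, this, Int.toNat_natCast, Finset.prod_const,
      Finset.card_univ, Fintype.card_fin]
  calc (jbLevel ⁻¹' {j} : Set (Fin d → ℤ)).encard ≤ (Finset.Icc (-c) c : Set _).encard :=
        Set.encard_le_encard hsub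
    _ = ((2 ^ (j + 2) + 1) ^ d : ℕ) := by rw [Set.encard_coe_eq_coe_finsetCard, hcard]
    _ ≤ ((2 ^ (j + 3)) ^ d : ℕ) := by
        have : 2 ^ (j + 2) + 1 ≤ 2 ^ (j + 3) := by
          have := Nat.one_le_two_pow (n := j + 2)
          rw [pow_succ 2 (j + 2)]
          omega
        exact_mod_cast Nat.pow_le_pow_left this d

lemma tsum_comp_jbLevel_le (g : ℕ → ℝ≥0∞) :
    ∑' m : Fin d → ℤ, g (jbLevel m) ≤ ∑' j, (2 ^ (j + 3)) ^ d * g j := by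
  rw [← ENNReal.tsum_fiberwise _ jbLevel]
  refine ENNReal.tsum_le_tsum fun j ↦ ?_
  calc ∑' m : jbLevel ⁻¹' {j}, g (jbLevel (m : Fin d → ℤ))
      = ∑' _ : (jbLevel ⁻¹' {j} : Set (Fin d → ℤ)), g j :=
        tsum_congr fun m ↦ by rw [show jbLevel (m : Fin d → ℤ) = j from m.2]
    _ = (jbLevel ⁻¹' {j} : Set (Fin d → ℤ)).encard * g j := ENNReal.tsum_set_const _ _
    _ ≤ (2 ^ (j + 3)) ^ d * g j := by
        gcongr
        exact_mod_cast ENat.toENNReal_le.2 (encard_jbLevel_fiber_le j)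

lemma ofReal_two_pow_rpow (k : ℕ) (x : ℝ) :
    ENNReal.ofReal (((2 : ℝ) ^ k) ^ x) = 2 ^ (x * k) := by
  rw [← Real.rpow_natCast, ← Real.rpow_mul zero_le_two, ← ENNReal.ofReal_rpow_of_pos two_pos,
    ENNReal.ofReal_ofNat, mul_comm]

lemma ofReal_jb_rpow_neg_le {γ : ℝ} (hγ : 0 ≤ γ) (m : Fin d → ℤ) :
    ENNReal.ofReal (jb m ^ (-γ)) ≤ 2 ^ (-γ * jbLevel m) :=
  ofReal_two_pow_rpow _ _ ▸ ENNReal.ofReal_le_ofReal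
    (Real.rpow_le_rpow_of_nonpos (by positivity) (two_pow_jbLevel_le m) (neg_nonpos.2 hγ))

lemma two_rpow_neg_mul_le_ofReal_jb_rpow {q : ℝ} (hq : 0 ≤ q) {n : Fin d → ℤ} {K : ℕ}
    (hK : jbLevel n ≤ K + 1) :
    (2 : ℝ≥0∞) ^ (-(q * K)) ≤ 2 ^ (2 * q) * ENNReal.ofReal (jb n ^ (-q)) := by
  have hjb : jb n ≤ 2 ^ (K + 2) := (jb_lt_two_pow_jbLevel_succ n).le.trans
    (pow_le_pow_right₀ one_le_two (by omega))
  calc (2 : ℝ≥0∞) ^ (-(q * K)) = 2 ^ (2 * q) * 2 ^ (-q * (K + 2 : ℕ)) := by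
        rw [← ENNReal.rpow_add _ _ two_ne_zero ENNReal.ofNat_ne_top]
        push_cast; ring_nf
    _ ≤ 2 ^ (2 * q) * ENNReal.ofReal (jb n ^ (-q)) := by
        rw [← ofReal_two_pow_rpow]
        exact mul_le_mul_right (ENNReal.ofReal_le_ofReal <|
          Real.rpow_le_rpow_of_nonpos (jb_pos n) hjb (neg_nonpos.2 hq)) _

lemma tsum_pow_natAbs_sub_le (ρ : ℝ≥0∞) (K : ℕ) :
    ∑' j : ℕ, ρ ^ ((j : ℤ) - K).natAbs ≤ 2 * (1 - ρ)⁻¹ := by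
  calc ∑' j : ℕ, ρ ^ ((j : ℤ) - K).natAbs ≤ ∑' i : ℤ, ρ ^ i.natAbs :=
        ENNReal.tsum_comp_le_tsum_of_injective (fun a b h ↦ by simpa using h)
          (fun i : ℤ ↦ ρ ^ i.natAbs)
    _ = ∑' i : ℕ, ρ ^ i + ∑' i : ℕ, ρ ^ (i + 1) := by
        rw [tsum_of_nat_of_neg_add_one ENNReal.summable ENNReal.summable]
        simp only [Int.natAbs_natCast, Int.natAbs_neg]
        rfl
    _ ≤ ∑' i : ℕ, ρ ^ i + ∑' i : ℕ, ρ ^ i :=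
        add_le_add le_rfl <|
          ENNReal.tsum_comp_le_tsum_of_injective (add_left_injective 1) (ρ ^ ·)
    _ = 2 * (1 - ρ)⁻¹ := by rw [ENNReal.tsum_geometric, two_mul]

noncomputable def dyadicWeight (α β : ℝ) (K j : ℕ) : ℝ≥0∞ :=
  2 ^ (-(α * j) - β * (max j K : ℕ))

lemma mul_le_dyadicWeight_add {α β : ℝ} (hα : 0 ≤ α) (hβ : 0 ≤ β) {K a b : ℕ}
    (hK : K ≤ max a b) :
    (2 : ℝ≥0∞) ^ (-α * a) * 2 ^ (-β * b) ≤ dyadicWeight α β K a + dyadicWeight β α K b := by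
  rw [← ENNReal.rpow_add _ _ two_ne_zero ENNReal.ofNat_ne_top]
  rcases le_total a b with h | h
  · have : ((max a K : ℕ) : ℝ) ≤ b := by exact_mod_cast (by omega : max a K ≤ b)
    exact le_add_right <| ENNReal.rpow_le_rpow_of_exponent_le one_le_two <| by
      nlinarith [mul_le_mul_of_nonneg_left this hβ]
  · have : ((max b K : ℕ) : ℝ) ≤ a := by exact_mod_cast (by omega : max b K ≤ a)
    exact le_add_left <| ENNReal.rpow_le_rpow_of_exponent_le one_le_two <| by
      nlinarith [mul_le_mul_of_nonneg_left this hα]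

lemma two_pow_mul_dyadicWeight_le {α β s : ℝ} (hs₁ : s ≤ d - α) (hs₂ : s ≤ α + β - d)
    (K j : ℕ) :
    (2 ^ (j + 3)) ^ d * dyadicWeight α β K j
      ≤ 2 ^ ((3 * d : ℝ) - (α + β - d) * K) * (2 ^ (-s)) ^ ((j : ℤ) - K).natAbs := by
  have habs : ((((j : ℤ) - K).natAbs : ℕ) : ℝ) = |(j : ℝ) - K| := by
    rw [Nat.cast_natAbs]; push_cast; rfl
  rw [dyadicWeight, ← pow_mul, ← ENNReal.rpow_natCast, ← ENNReal.rpow_natCast,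
    ← ENNReal.rpow_mul, ← ENNReal.rpow_add _ _ two_ne_zero ENNReal.ofNat_ne_top,
    ← ENNReal.rpow_add _ _ two_ne_zero ENNReal.ofNat_ne_top, habs]
  refine ENNReal.rpow_le_rpow_of_exponent_le one_le_two ?_
  push_cast
  -- The left exponent is `3d - (α + β - d)K` minus `(K - j)(d - α)` for `j ≤ K`
  -- and minus `(j - K)(α + β - d)` for `K ≤ j`.
  rcases le_total j K with h | h
  · have h' : (j : ℝ) ≤ K := by exact_mod_cast h
    rw [max_eq_right h', abs_of_nonpos (by linarith)]
    nlinarith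
  · have h' : (K : ℝ) ≤ j := by exact_mod_cast h
    rw [max_eq_left h', abs_of_nonneg (by linarith)]
    nlinarith

lemma tsum_dyadicWeight_jbLevel_le {α β s : ℝ} (hs₁ : s ≤ d - α) (hs₂ : s ≤ α + β - d)
    (K : ℕ) :
    ∑' m : Fin d → ℤ, dyadicWeight α β K (jbLevel m)
      ≤ 2 ^ (3 * d) * (2 * (1 - 2 ^ (-s))⁻¹) * 2 ^ (-((α + β - d) * K)) := by
  calc ∑' m : Fin d → ℤ, dyadicWeight α β K (jbLevel m)
      ≤ ∑' j, (2 ^ (j + 3)) ^ d * dyadicWeight α β K j := tsum_comp_jbLevel_le _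
    _ ≤ ∑' j : ℕ, 2 ^ ((3 * d : ℝ) - (α + β - d) * K) * (2 ^ (-s)) ^ ((j : ℤ) - K).natAbs :=
        ENNReal.tsum_le_tsum fun j ↦ two_pow_mul_dyadicWeight_le hs₁ hs₂ K j
    _ ≤ 2 ^ ((3 * d : ℝ) - (α + β - d) * K) * (2 * (1 - 2 ^ (-s))⁻¹) := by
        rw [ENNReal.tsum_mul_left]
        exact mul_le_mul_right (tsum_pow_natAbs_sub_le _ K) _
    _ = 2 ^ (3 * d) * (2 * (1 - 2 ^ (-s))⁻¹) * 2 ^ (-((α + β - d) * K)) := by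
        have : (2 : ℝ≥0∞) ^ (3 * d : ℝ) = 2 ^ (3 * d) := by
          rw [← ENNReal.rpow_natCast]; push_cast; rfl
        rw [sub_eq_add_neg, ENNReal.rpow_add _ _ two_ne_zero ENNReal.ofNat_ne_top, this]
        ring

lemma ofReal_convolution_summand_le {α β : ℝ} (hα : 0 ≤ α) (hβ : 0 ≤ β) (n n₁ : Fin d → ℤ) :
    ENNReal.ofReal (jb n₁ ^ (-α) * jb (n - n₁) ^ (-β))
      ≤ dyadicWeight α β (jbLevel n - 1) (jbLevel n₁)
        + dyadicWeight β α (jbLevel n - 1) (jbLevel (n - n₁)) := by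
  have hK : jbLevel n - 1 ≤ max (jbLevel n₁) (jbLevel (n - n₁)) := by
    have := jbLevel_add_le n₁ (n - n₁)
    rw [add_sub_cancel] at this
    omega
  rw [ENNReal.ofReal_mul (Real.rpow_nonneg (jb_pos n₁).le _)]
  exact (mul_le_mul' (ofReal_jb_rpow_neg_le hα _) (ofReal_jb_rpow_neg_le hβ _)).trans
    (mul_le_dyadicWeight_add hα hβ hK)

lemma tsum_ofReal_convolution_le {α β s : ℝ} (hs : 0 ≤ s) (hsα : s ≤ d - α)
    (hsβ : s ≤ d - β) (hsq : s ≤ α + β - d) (n : Fin d → ℤ) :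
    ∑' n₁ : Fin d → ℤ, ENNReal.ofReal (jb n₁ ^ (-α) * jb (n - n₁) ^ (-β))
      ≤ 2 * (2 ^ (3 * d) * (2 * (1 - 2 ^ (-s))⁻¹)) * 2 ^ (2 * (α + β - d))
        * ENNReal.ofReal (jb n ^ ((d : ℝ) - α - β)) := by
  set K := jbLevel n - 1
  set B : ℝ≥0∞ := 2 ^ (3 * d) * (2 * (1 - 2 ^ (-s))⁻¹)
  have hβα := tsum_dyadicWeight_jbLevel_le (α := β) (β := α) hsβ (by linarith) K
  rw [add_comm β α] at hβα
  calc ∑' n₁ : Fin d → ℤ, ENNReal.ofReal (jb n₁ ^ (-α) * jb (n - n₁) ^ (-β))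
      ≤ ∑' n₁, (dyadicWeight α β K (jbLevel n₁) + dyadicWeight β α K (jbLevel (n - n₁))) :=
        ENNReal.tsum_le_tsum <| ofReal_convolution_summand_le (by linarith) (by linarith) n
    _ = ∑' m, dyadicWeight α β K (jbLevel m) + ∑' m, dyadicWeight β α K (jbLevel m) := by
        rw [ENNReal.tsum_add]
        congr 1
        exact (Equiv.subLeft n).tsum_eq fun m ↦ dyadicWeight β α K (jbLevel m)
    _ ≤ 2 * B * 2 ^ (-((α + β - d) * K)) := by
        rw [mul_assoc, two_mul]
        exact add_le_add (tsum_dyadicWeight_jbLevel_le hsα hsq K) hβα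
    _ ≤ 2 * B * 2 ^ (2 * (α + β - d)) * ENNReal.ofReal (jb n ^ ((d : ℝ) - α - β)) := by
        rw [mul_assoc _ (2 ^ _), show (d : ℝ) - α - β = -(α + β - d) by ring]
        exact mul_le_mul_right
          (two_rpow_neg_mul_le_ofReal_jb_rpow (by linarith) (by omega)) _

theorem discrete_convolution_bound_general
    (d : ℕ) (α β : ℝ)
    (hαβ : (d : ℝ) < α + β) (hα : α < d) (hβ : β < d) :
    ∃ C : ℝ, 0 < C ∧ ∀ n : Fin d → ℤ,
      ∑' n₁ : Fin d → ℤ,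
          ENNReal.ofReal (jb n₁ ^ (-α) * jb (n - n₁) ^ (-β))
        ≤ ENNReal.ofReal (C * jb n ^ ((d : ℝ) - α - β)) := by
  set s := min (min ((d : ℝ) - α) (d - β)) (α + β - d)
  have hs : 0 < s := lt_min (lt_min (by linarith) (by linarith)) (by linarith)
  have hB : (2 : ℝ≥0∞) * (2 ^ (3 * d) * (2 * (1 - 2 ^ (-s))⁻¹)) * 2 ^ (2 * (α + β - d)) < ⊤ := by
    have hlt : (2 : ℝ≥0∞) ^ (-s) < 1 :=
      ENNReal.rpow_lt_one_of_one_lt_of_neg ENNReal.one_lt_two (neg_lt_zero.2 hs)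
    have : (1 - (2 : ℝ≥0∞) ^ (-s))⁻¹ ≠ ⊤ := ENNReal.inv_ne_top.2 (tsub_pos_of_lt hlt).ne'
    finiteness
  obtain ⟨C, -, hBC, -⟩ := ENNReal.lt_iff_exists_real_btwn.1 hB
  have hC : 0 < C := ENNReal.ofReal_pos.1 (pos_of_gt hBC)
  refine ⟨C, hC, fun n ↦ ?_⟩
  rw [ENNReal.ofReal_mul hC.le]
  exact (tsum_ofReal_convolution_le hs.le ((min_le_left _ _).trans (min_le_left _ _))
    ((min_le_left _ _).trans (min_le_right _ _)) (min_le_right _ _) n).trans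
    (mul_le_mul_left hBC.le _)

theorem discrete_convolution_bound
    (d : ℕ) (hd : 1 ≤ d) (α β : ℝ)
    (hαβ : (d : ℝ) < α + β) (hα : α < d) (hβ : β < d) :
    ∃ C : ℝ, 0 < C ∧ ∀ n : Fin d → ℤ,
      ∑' n₁ : Fin d → ℤ,
          ENNReal.ofReal (jb n₁ ^ (-α) * jb (n - n₁) ^ (-β))
        ≤ ENNReal.ofReal (C * jb n ^ ((d : ℝ) - α - β)) :=
  discrete_convolution_bound_general d α β hαβ hα hβ
end

section
/- For all vectors n₁, n₂ ∈ ℝ³, writing n = n₁ + n₂, one has ⟨n⟩ + ⟨n₂⟩ − ⟨n₁⟩ ≥ 2(|n||n₂| + n·n₂)/(⟨n⟩ + ⟨n₁⟩ + ⟨n₂⟩) ≥ 0. (When n, n₂ ≠ 0, the quantity |n||n₂| + n·n₂ equals |n||n₂|(1 − cos θ), where θ is the angle between n₂ and −n.) -/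
/-!
Multiplying by the denominator turns the claim into a difference of squares: with `n = n₁ + n₂`
and `n₁ = n - n₂`,
`(⟨n⟩ + ⟨n₂⟩ - ⟨n₁⟩)(⟨n⟩ + ⟨n₁⟩ + ⟨n₂⟩) = (⟨n⟩ + ⟨n₂⟩)² - ⟨n₁⟩² = 1 + 2 n·n₂ + 2⟨n⟩⟨n₂⟩`,
and `⟨n⟩⟨n₂⟩ ≥ |n||n₂|`. Nonnegativity of the middle term is Cauchy–Schwarz.
-/

open scoped RealInnerProductSpace

/-- Japanese bracket of `x ∈ ℝ³`: `⟨x⟩ = (1 + |x|²)^{1/2}`. -/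
noncomputable def jbE (x : EuclideanSpace ℝ (Fin 3)) : ℝ :=
  Real.sqrt (1 + ‖x‖ ^ 2)

theorem norm_mul_norm_add_real_inner_nonneg {F : Type*} [NormedAddCommGroup F]
    [InnerProductSpace ℝ F] (x y : F) : 0 ≤ ‖x‖ * ‖y‖ + ⟪x, y⟫ := by
  linarith [neg_le_of_abs_le (abs_real_inner_le_norm x y)]

section JapaneseBracket

variable (x y : EuclideanSpace ℝ (Fin 3))

theorem jbE_sq : jbE x ^ 2 = 1 + ‖x‖ ^ 2 :=
  Real.sq_sqrt (by positivity)

theorem one_le_jbE : 1 ≤ jbE x :=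
  Real.one_le_sqrt.mpr (by nlinarith [sq_nonneg ‖x‖])

theorem norm_le_jbE : ‖x‖ ≤ jbE x :=
  (Real.le_sqrt (norm_nonneg x) (by positivity)).mpr (by linarith)

theorem norm_mul_norm_le_jbE_mul_jbE : ‖x‖ * ‖y‖ ≤ jbE x * jbE y :=
  mul_le_mul (norm_le_jbE x) (norm_le_jbE y) (norm_nonneg y) (by linarith [one_le_jbE x])

theorem resonance_mul_jbE_sum :
    (jbE (x + y) + jbE y - jbE x) * (jbE (x + y) + jbE x + jbE y)
      = 1 + 2 * ⟪x + y, y⟫ + 2 * (jbE (x + y) * jbE y) := by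
  have hinner : ⟪x + y, y⟫ = ⟪x, y⟫ + ‖y‖ ^ 2 := by
    rw [inner_add_left, real_inner_self_eq_norm_sq]
  rw [hinner]
  linear_combination jbE_sq (x + y) + jbE_sq y - jbE_sq x + norm_add_sq_real x y

end JapaneseBracket

theorem resonance_lower_bound
    (n₁ n₂ : EuclideanSpace ℝ (Fin 3)) :
    0 ≤ 2 * (‖n₁ + n₂‖ * ‖n₂‖ + ⟪n₁ + n₂, n₂⟫)
          / (jbE (n₁ + n₂) + jbE n₁ + jbE n₂) ∧
    2 * (‖n₁ + n₂‖ * ‖n₂‖ + ⟪n₁ + n₂, n₂⟫)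
          / (jbE (n₁ + n₂) + jbE n₁ + jbE n₂)
      ≤ jbE (n₁ + n₂) + jbE n₂ - jbE n₁ := by
  have hden : 0 < jbE (n₁ + n₂) + jbE n₁ + jbE n₂ := by
    linarith [one_le_jbE (n₁ + n₂), one_le_jbE n₁, one_le_jbE n₂]
  refine ⟨div_nonneg ?_ hden.le, ?_⟩
  · linarith [norm_mul_norm_add_real_inner_nonneg (n₁ + n₂) n₂]
  · rw [div_le_iff₀ hden, resonance_mul_jbE_sum]
    linarith [norm_mul_norm_le_jbE_mul_jbE (n₁ + n₂) n₂]
end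

section
/- For all vectors n₁, n₂ ∈ ℝ³, writing n = n₁ + n₂, one has ⟨n₁⟩ + ⟨n₂⟩ − ⟨n⟩ ≥ 2(|n₁||n₂| − n₁·n₂)/(⟨n⟩ + ⟨n₁⟩ + ⟨n₂⟩) ≥ 0. (When n₁, n₂ ≠ 0, the quantity |n₁||n₂| − n₁·n₂ equals |n₁||n₂|(1 − cos θ), where θ is the angle between n₁ and n₂.) -/
/-!
Write `a = ⟨n₁⟩`, `b = ⟨n₂⟩`, `c = ⟨n₁ + n₂⟩`. Expanding `|n₁ + n₂|²` gives
`(a + b)² - c² = 1 + 2 (a b - n₁ · n₂)`, and `a b ≥ |n₁| |n₂|`, so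
`(a + b)² - c² ≥ 2 (|n₁| |n₂| - n₁ · n₂)`, which is nonnegative by Cauchy–Schwarz.
Dividing by `a + b + c` turns the difference of squares into `a + b - c`.
-/

open scoped RealInnerProductSpace

lemma Real.mul_le_sqrt_one_add_sq_mul {r s : ℝ} (hs : 0 ≤ s) :
    r * s ≤ √(1 + r ^ 2) * √(1 + s ^ 2) := by
  have hr' : r ≤ √(1 + r ^ 2) := Real.le_sqrt_of_sq_le (by linarith)
  have hs' : s ≤ √(1 + s ^ 2) := Real.le_sqrt_of_sq_le (by linarith)
  exact mul_le_mul hr' hs' hs (Real.sqrt_nonneg _)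

lemma div_le_sub_of_le_sq_sub_sq {d s c : ℝ} (hsc : 0 < s + c) (hd : d ≤ s ^ 2 - c ^ 2) :
    d / (s + c) ≤ s - c := by
  rw [div_le_iff₀ hsc]
  nlinarith

section InnerProductSpace

variable {E : Type*} [NormedAddCommGroup E] [InnerProductSpace ℝ E]

lemma sq_add_sqrt_one_add_sq_sub (x y : E) :
    (√(1 + ‖x‖ ^ 2) + √(1 + ‖y‖ ^ 2)) ^ 2 - √(1 + ‖x + y‖ ^ 2) ^ 2
      = 1 + 2 * (√(1 + ‖x‖ ^ 2) * √(1 + ‖y‖ ^ 2) - ⟪x, y⟫) := by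
  rw [add_sq, Real.sq_sqrt (by positivity), Real.sq_sqrt (by positivity),
    Real.sq_sqrt (by positivity), norm_add_sq_real]
  ring

lemma two_mul_norm_mul_sub_inner_le (x y : E) :
    2 * (‖x‖ * ‖y‖ - ⟪x, y⟫)
      ≤ (√(1 + ‖x‖ ^ 2) + √(1 + ‖y‖ ^ 2)) ^ 2 - √(1 + ‖x + y‖ ^ 2) ^ 2 := by
  rw [sq_add_sqrt_one_add_sq_sub]
  nlinarith [Real.mul_le_sqrt_one_add_sq_mul (r := ‖x‖) (norm_nonneg y)]

end InnerProductSpace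

theorem resonance_lower_bound'
    (n₁ n₂ : EuclideanSpace ℝ (Fin 3)) :
    0 ≤ 2 * (‖n₁‖ * ‖n₂‖ - ⟪n₁, n₂⟫)
          / (jbE (n₁ + n₂) + jbE n₁ + jbE n₂) ∧
    2 * (‖n₁‖ * ‖n₂‖ - ⟪n₁, n₂⟫)
          / (jbE (n₁ + n₂) + jbE n₁ + jbE n₂)
      ≤ jbE n₁ + jbE n₂ - jbE (n₁ + n₂) := by
  have hpos : 0 < jbE n₁ + jbE n₂ + jbE (n₁ + n₂) := by unfold jbE; positivity
  rw [show jbE (n₁ + n₂) + jbE n₁ + jbE n₂ = jbE n₁ + jbE n₂ + jbE (n₁ + n₂) by ring]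
  refine ⟨div_nonneg ?_ hpos.le, div_le_sub_of_le_sq_sub_sq hpos ?_⟩
  · linarith [real_inner_le_norm n₁ n₂]
  · exact two_mul_norm_mul_sub_inner_le n₁ n₂
end

section
/- For every T > 0 there exists a constant C(T) > 0 (one may take C(T) = 2T³ + T⁴) such that for all real numbers κ₁, κ₂ and all t ∈ [0, T]: | ∫₀ᵗ e^{−iκ₁ t₁} ( ∫₀^{t₁} t₂² e^{−iκ₂ t₂} dt₂ ) dt₁ | ≤ C(T) (1 + |κ₁|)^{−1}. -/
/-!
Let `F(t₁)` be the inner integral, so `‖F t₁‖ ≤ t₁³/3` and `F' t₁ = t₁² e^{-iκ₂t₁}`. The outer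
integral `X` is at most `t⁴/3` by the trivial size estimate, and one integration by parts against
`e^{-iκ₁t₁}` gives `|κ₁| X ≤ 2t³/3`. Adding the two, `(1 + |κ₁|) X ≤ t⁴/3 + 2t³/3`.
-/

open MeasureTheory intervalIntegral

lemma norm_exp_neg_I_mul (κ x : ℝ) : ‖Complex.exp (-Complex.I * κ * x)‖ = 1 := by
  simp [Complex.norm_exp]

lemma norm_sq_mul_exp_neg_I_mul (κ x : ℝ) :
    ‖(x : ℂ) ^ 2 * Complex.exp (-Complex.I * κ * x)‖ = x ^ 2 := by
  rw [norm_mul, norm_exp_neg_I_mul, norm_pow, Complex.norm_real, Real.norm_eq_abs, sq_abs, mul_one]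

lemma norm_integral_le_of_norm_le_pow {g : ℝ → ℂ} {t : ℝ} (n : ℕ) (ht : 0 ≤ t)
    (hg : ∀ x ∈ Set.Ioc 0 t, ‖g x‖ ≤ x ^ n) :
    ‖∫ x in (0:ℝ)..t, g x‖ ≤ t ^ (n + 1) / (n + 1) := by
  have h := norm_integral_le_of_norm_le (μ := volume) ht (Filter.Eventually.of_forall hg)
    ((continuous_pow n).intervalIntegrable 0 t)
  simpa [integral_pow] using h

lemma abs_mul_norm_integral_exp_mul_le (κ : ℝ) {F f : ℝ → ℂ} {a b : ℝ}
    (hF : ∀ x ∈ Set.uIcc a b, HasDerivAt F (f x) x) (hf : IntervalIntegrable f volume a b) :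
    |κ| * ‖∫ x in a..b, Complex.exp (-Complex.I * κ * x) * F x‖ ≤
      ‖F b‖ + ‖F a‖ + ‖∫ x in a..b, f x * Complex.exp (-Complex.I * κ * x)‖ := by
  set c : ℂ := -Complex.I * κ
  have hexp : ∀ x : ℝ, HasDerivAt (fun x : ℝ => Complex.exp (c * x)) (Complex.exp (c * x) * c) x :=
    fun x => by simpa using ((Complex.ofRealCLM.hasDerivAt (x := x)).const_mul c).cexp
  -- Differentiating `exp (c x)` rather than integrating it avoids dividing by `c`, so `κ = 0` is allowed.
  have ibp := integral_mul_deriv_eq_deriv_mul hF (fun x _ => hexp x) hf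
    ((Continuous.intervalIntegrable (by fun_prop) a b))
  have hc : ‖c‖ = |κ| := by simp [c]
  calc |κ| * ‖∫ x in a..b, Complex.exp (c * x) * F x‖
      = ‖∫ x in a..b, F x * (Complex.exp (c * x) * c)‖ := by
        rw [← hc, ← norm_mul, ← intervalIntegral.integral_const_mul]
        congr 1
        exact integral_congr fun x _ => by ring
    _ ≤ ‖F b‖ + ‖F a‖ + ‖∫ x in a..b, f x * Complex.exp (c * x)‖ := by
        rw [ibp]
        refine (norm_sub_le _ _).trans ?_
        gcongr
        refine (norm_sub_le _ _).trans_eq ?_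
        simp only [norm_mul, c, norm_exp_neg_I_mul, mul_one]

lemma le_mul_inv_one_add {X A B k : ℝ} (hk : 0 ≤ k) (hA : X ≤ A) (hB : k * X ≤ B) :
    X ≤ (A + B) * (1 + k)⁻¹ := by
  rw [← div_eq_mul_inv, le_div_iff₀ (by linarith)]
  linarith

theorem oscillatory_integral_bound_general
    (T : ℝ) (κ₁ κ₂ : ℝ) (t : ℝ) (ht : t ∈ Set.Icc 0 T) :
    ‖∫ t₁ in (0:ℝ)..t, Complex.exp (-Complex.I * κ₁ * t₁) *
        ∫ t₂ in (0:ℝ)..t₁, (t₂ : ℂ) ^ 2 * Complex.exp (-Complex.I * κ₂ * t₂)‖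
      ≤ (2 * T ^ 3 + T ^ 4) * (1 + |κ₁|)⁻¹ := by
  obtain ⟨ht0, htT⟩ := ht
  set f : ℝ → ℂ := fun x => (x : ℂ) ^ 2 * Complex.exp (-Complex.I * κ₂ * x)
  have hf : Continuous f := by fun_prop
  have hnorm_f : ∀ x : ℝ, ‖f x‖ = x ^ 2 := norm_sq_mul_exp_neg_I_mul κ₂
  have hprimitive : ∀ x, 0 ≤ x → ‖∫ y in (0:ℝ)..x, f y‖ ≤ x ^ 3 / 3 := fun x hx =>
    (norm_integral_le_of_norm_le_pow 2 hx fun y _ => (hnorm_f y).le).trans_eq (by norm_num)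
  have hsmall : ‖∫ x in (0:ℝ)..t, Complex.exp (-Complex.I * κ₁ * x) * ∫ y in (0:ℝ)..x, f y‖
      ≤ t ^ 4 / 3 := calc
    _ ≤ t ^ 3 / 3 * |t - 0| := norm_integral_le_of_norm_le_const fun x hx => by
      rw [Set.uIoc_of_le ht0] at hx
      rw [norm_mul, norm_exp_neg_I_mul, one_mul]
      exact (hprimitive x hx.1.le).trans (by gcongr; exacts [hx.1.le, hx.2])
    _ = t ^ 4 / 3 := by rw [sub_zero, abs_of_nonneg ht0]; ring
  have hlarge : |κ₁| * ‖∫ x in (0:ℝ)..t, Complex.exp (-Complex.I * κ₁ * x) * ∫ y in (0:ℝ)..x, f y‖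
      ≤ 2 * t ^ 3 / 3 := by
    refine (abs_mul_norm_integral_exp_mul_le κ₁
      (fun x _ => (hf.integral_hasStrictDerivAt 0 x).hasDerivAt) (hf.intervalIntegrable 0 t)).trans ?_
    have hrest : ‖∫ x in (0:ℝ)..t, f x * Complex.exp (-Complex.I * κ₁ * x)‖ ≤ t ^ 3 / 3 :=
      (norm_integral_le_of_norm_le_pow 2 ht0 fun x _ => by
        rw [norm_mul, norm_exp_neg_I_mul, hnorm_f, mul_one]).trans_eq (by norm_num)
    rw [integral_same, norm_zero, add_zero]
    linarith [hprimitive t ht0]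
  calc _ ≤ (t ^ 4 / 3 + 2 * t ^ 3 / 3) * (1 + |κ₁|)⁻¹ :=
        le_mul_inv_one_add (abs_nonneg κ₁) hsmall hlarge
    _ ≤ (2 * T ^ 3 + T ^ 4) * (1 + |κ₁|)⁻¹ := by
      have h3 : t ^ 3 ≤ T ^ 3 := by gcongr
      have h4 : t ^ 4 ≤ T ^ 4 := by gcongr
      gcongr ?_ * _
      linarith [pow_nonneg ht0 3, pow_nonneg ht0 4]

theorem oscillatory_integral_bound
    (T : ℝ) (hT : 0 < T) (κ₁ κ₂ : ℝ) (t : ℝ) (ht : t ∈ Set.Icc 0 T) :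
    ‖∫ t₁ in (0:ℝ)..t, Complex.exp (-Complex.I * κ₁ * t₁) *
        ∫ t₂ in (0:ℝ)..t₁, (t₂ : ℂ) ^ 2 * Complex.exp (-Complex.I * κ₂ * t₂)‖
      ≤ (2 * T ^ 3 + T ^ 4) * (1 + |κ₁|)⁻¹ :=
  oscillatory_integral_bound_general T κ₁ κ₂ t ht
end

section
/- For every T > 0 there exists a constant C(T) > 0 (one may take C(T) = 2T⁴ + T⁵) such that for all real numbers κ₃, κ₄ and all t ∈ [0, T]: | ∫₀ᵗ t₁ e^{−iκ₃ t₁} ( ∫₀^{t₁} t₂² e^{−iκ₄ t₂} dt₂ ) dt₁ | ≤ C(T) (1 + |κ₃|)^{−1}. -/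
/-!
Write the integral as `∫₀ᵗ F(t₁) e^{-iκ₃t₁} dt₁` with `F(t₁) = t₁ ∫₀^{t₁} t₂² e^{-iκ₄t₂} dt₂`.
Since `|F| ≤ T⁴/3` and `|F'| ≤ 4T³/3` on `[0, T]` uniformly in `κ₄`, the integral is at most
`T⁵/3`, and one integration by parts against `e^{-iκ₃t₁}` shows that `|κ₃|` times it is at most
`5T⁴/3`. Adding the two bounds controls `(1 + |κ₃|)` times the integral.
-/

open Complex intervalIntegral MeasureTheory Set

lemma norm_cexp_neg_I_mul (κ x : ℝ) : ‖cexp (-I * κ * x)‖ = 1 := by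
  rw [norm_exp]; simp

lemma abs_mul_norm_integral_mul_cexp_le {f f' : ℝ → ℂ} {a b κ M : ℝ}
    (hf : ∀ x ∈ uIcc a b, HasDerivAt f (f' x) x) (hf' : IntervalIntegrable f' volume a b)
    (hM : ∀ x ∈ uIoc a b, ‖f' x‖ ≤ M) :
    |κ| * ‖∫ x in a..b, f x * cexp (-I * κ * x)‖ ≤ ‖f a‖ + ‖f b‖ + M * |b - a| := by
  set c : ℂ := -I * κ
  -- Integrating `f` against `(cexp (c x))' = c cexp (c x)` avoids dividing by `c`, so `κ = 0` is
  -- not a special case.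
  have hexp : ∀ x : ℝ, HasDerivAt (fun y : ℝ => cexp (c * y)) (c * cexp (c * x)) x := fun x => by
    simpa [mul_comm] using ((hasDerivAt_id (x : ℂ)).const_mul c).cexp.comp_ofReal
  have hparts := integral_mul_deriv_eq_deriv_mul hf (fun x _ => hexp x) hf'
    ((continuous_const.mul (by fun_prop)).intervalIntegrable a b)
  have hnorm : ∀ x : ℝ, ‖cexp (c * x)‖ = 1 := norm_cexp_neg_I_mul κ
  calc |κ| * ‖∫ x in a..b, f x * cexp (c * x)‖
      = ‖∫ x in a..b, f x * (c * cexp (c * x))‖ := by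
        rw [show |κ| = ‖c‖ by simp [c], ← norm_mul, ← intervalIntegral.integral_const_mul]
        congr 2 with x; ring
    _ ≤ ‖f b * cexp (c * b)‖ + ‖f a * cexp (c * a)‖ + ‖∫ x in a..b, f' x * cexp (c * x)‖ := by
        rw [hparts]; exact norm_sub_le_of_le (norm_sub_le _ _) le_rfl
    _ ≤ ‖f a‖ + ‖f b‖ + M * |b - a| := by
        rw [norm_mul, norm_mul, hnorm, hnorm, mul_one, mul_one, add_comm ‖f b‖]
        gcongr
        exact norm_integral_le_of_norm_le_const fun x hx => by
          rw [norm_mul, hnorm, mul_one]; exact hM x hx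

noncomputable def oscPrimitive (κ x : ℝ) : ℂ := ∫ y in (0:ℝ)..x, (y : ℂ) ^ 2 * cexp (-I * κ * y)

section OscPrimitive

variable (κ : ℝ) {x : ℝ}

lemma norm_oscPrimitive_le (hx : 0 ≤ x) : ‖oscPrimitive κ x‖ ≤ x ^ 3 / 3 :=
  calc ‖oscPrimitive κ x‖
      ≤ ∫ y in (0:ℝ)..x, ‖(y : ℂ) ^ 2 * cexp (-I * κ * y)‖ := norm_integral_le_integral_norm hx
    _ = ∫ y in (0:ℝ)..x, y ^ 2 := by
        refine integral_congr fun y _ => ?_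
        simp only [norm_mul, norm_cexp_neg_I_mul, norm_pow, norm_real, Real.norm_eq_abs, sq_abs,
          mul_one]
    _ = x ^ 3 / 3 := by norm_num [integral_pow]

lemma hasDerivAt_oscPrimitive (x : ℝ) :
    HasDerivAt (oscPrimitive κ) (x ^ 2 * cexp (-I * κ * x)) x :=
  ((by fun_prop : Continuous fun y : ℝ => (y : ℂ) ^ 2 * cexp (-I * κ * y))
    |>.integral_hasStrictDerivAt 0 x).hasDerivAt

lemma continuous_oscPrimitive : Continuous (oscPrimitive κ) :=
  continuous_iff_continuousAt.2 fun x => (hasDerivAt_oscPrimitive κ x).continuousAt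

lemma hasDerivAt_ofReal_mul_oscPrimitive (x : ℝ) :
    HasDerivAt (fun x : ℝ => x * oscPrimitive κ x)
      (oscPrimitive κ x + x * (x ^ 2 * cexp (-I * κ * x))) x :=
  ((hasDerivAt_id x).ofReal_comp.mul (hasDerivAt_oscPrimitive κ x)).congr_deriv (by simp)

lemma norm_ofReal_mul_oscPrimitive_le (hx : 0 ≤ x) : ‖x * oscPrimitive κ x‖ ≤ x ^ 4 / 3 := by
  rw [norm_mul, norm_real, Real.norm_of_nonneg hx]
  calc x * _ ≤ x * (x ^ 3 / 3) := by gcongr; exact norm_oscPrimitive_le κ hx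
    _ = x ^ 4 / 3 := by ring

lemma norm_oscPrimitive_add_le (hx : 0 ≤ x) :
    ‖oscPrimitive κ x + x * (x ^ 2 * cexp (-I * κ * x))‖ ≤ 4 * x ^ 3 / 3 := by
  refine (norm_add_le _ _).trans ?_
  have hterm : ‖(x : ℂ) * (x ^ 2 * cexp (-I * κ * x))‖ = x ^ 3 := by
    rw [norm_mul, norm_mul, norm_cexp_neg_I_mul, norm_pow, norm_real, Real.norm_of_nonneg hx]
    ring
  linarith [norm_oscPrimitive_le κ hx]

end OscPrimitive

theorem oscillatory_integral_bound_weighted_general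
    (T : ℝ) (κ₃ κ₄ : ℝ) (t : ℝ) (ht : t ∈ Set.Icc 0 T) :
    ‖∫ t₁ in (0:ℝ)..t, (t₁ : ℂ) * Complex.exp (-Complex.I * κ₃ * t₁) *
        ∫ t₂ in (0:ℝ)..t₁, (t₂ : ℂ) ^ 2 * Complex.exp (-Complex.I * κ₄ * t₂)‖
      ≤ (2 * T ^ 4 + T ^ 5) * (1 + |κ₃|)⁻¹ := by
  obtain ⟨ht0, htT⟩ := ht
  have hT : 0 ≤ T := ht0.trans htT
  have hIoc : ∀ x ∈ uIoc 0 t, 0 ≤ x ∧ x ≤ T := fun x hx => by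
    rw [uIoc_of_le ht0] at hx; exact ⟨hx.1.le, hx.2.trans htT⟩
  rw [integral_congr (g := fun x : ℝ => (x * oscPrimitive κ₄ x) * cexp (-I * κ₃ * x))
    fun _ _ => by simp only [oscPrimitive]; ring]
  have htrivial := norm_integral_le_of_norm_le_const fun x hx =>
    calc ‖(x * oscPrimitive κ₄ x) * cexp (-I * κ₃ * x)‖ ≤ x ^ 4 / 3 := by
          rw [norm_mul, norm_cexp_neg_I_mul, mul_one]
          exact norm_ofReal_mul_oscPrimitive_le κ₄ (hIoc x hx).1
      _ ≤ T ^ 4 / 3 := by gcongr; exacts [(hIoc x hx).1, (hIoc x hx).2]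
  have hparts := abs_mul_norm_integral_mul_cexp_le (κ := κ₃) (M := 4 * T ^ 3 / 3)
    (fun x _ => hasDerivAt_ofReal_mul_oscPrimitive κ₄ x)
    (((continuous_oscPrimitive κ₄).add (by fun_prop)).intervalIntegrable 0 t)
    fun x hx => (norm_oscPrimitive_add_le κ₄ (hIoc x hx).1).trans <| by
      gcongr; exacts [(hIoc x hx).1, (hIoc x hx).2]
  have hendpoint := norm_ofReal_mul_oscPrimitive_le κ₄ ht0
  simp only [sub_zero, abs_of_nonneg ht0, ofReal_zero, zero_mul, norm_zero, zero_add]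
    at htrivial hparts
  rw [← div_eq_mul_inv, le_div_iff₀' (by positivity), one_add_mul]
  nlinarith [pow_le_pow_left₀ ht0 htT 4, pow_nonneg hT 3, pow_nonneg hT 4]

theorem oscillatory_integral_bound_weighted
    (T : ℝ) (hT : 0 < T) (κ₃ κ₄ : ℝ) (t : ℝ) (ht : t ∈ Set.Icc 0 T) :
    ‖∫ t₁ in (0:ℝ)..t, (t₁ : ℂ) * Complex.exp (-Complex.I * κ₃ * t₁) *
        ∫ t₂ in (0:ℝ)..t₁, (t₂ : ℂ) ^ 2 * Complex.exp (-Complex.I * κ₄ * t₂)‖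
      ≤ (2 * T ^ 4 + T ^ 5) * (1 + |κ₃|)⁻¹ :=
  oscillatory_integral_bound_weighted_general T κ₃ κ₄ t ht
end

section
/- There exists an absolute constant C > 0 such that for every unit vector v ∈ ℝ³, every real N ≥ 1 and every θ ∈ (0, 1], the number of lattice points m ∈ ℤ³ with 0 < |m| ≤ N and m·v ≥ |m| cos θ (i.e. the angle between m and v is at most θ) is at most C N (Nθ + 1)². -/
/-!
A lattice point `m` of the cone satisfies `0 ≤ m ⬝ v ≤ N` and lies within distance
`|m| sin θ ≤ N θ` of the line `ℝ v`, so it lies in a tube of length `N` and radius `N θ`.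
Choose a coordinate `i` with `|v i| > 1/2`, which exists since `v` is a unit vector of `ℝ³`.
A lattice point `m` of the tube is determined by `⌊m ⬝ v⌋`, by the offsets of `m j` (`j ≠ i`) from
the rounded centre `⌊m ⬝ v⌋ v j`, each an integer of size `O(N θ + 1)`, and by the parity of `m i`:
once the first two agree, `m i` is fixed up to an error `< 1 / |v i| < 2`.
-/

/-- Euclidean norm of a lattice point `m ∈ ℤ³`. -/
noncomputable def enorm' (m : Fin 3 → ℤ) : ℝ :=
  Real.sqrt (∑ i, ((m i : ℝ)) ^ 2)

open Finset Real

noncomputable section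

variable {ι : Type*} [Fintype ι]

def latticeDot (v : ι → ℝ) (m : ι → ℤ) : ℝ := ∑ j, (m j : ℝ) * v j

def latticeTube (v : ι → ℝ) (N R : ℝ) : Set (ι → ℤ) :=
  {m | 0 ≤ latticeDot v m ∧ latticeDot v m ≤ N ∧ ∀ j, |(m j : ℝ) - latticeDot v m * v j| ≤ R}

variable (v : ι → ℝ) (i : ι)

theorem latticeDot_sub_of_forall_ne_eq (m m' : ι → ℤ) (h : ∀ j ≠ i, m j = m' j) :
    latticeDot v m - latticeDot v m' = ((m i : ℝ) - m' i) * v i := by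
  rw [latticeDot, latticeDot, ← Finset.sum_sub_distrib,
    Finset.sum_eq_single i (fun j _ hj => by simp [h j hj]) (by simp)]
  ring

variable [DecidableEq ι]

def tubeCode (m : ι → ℤ) : ℤ × ZMod 2 × ({j // j ≠ i} → ℤ) :=
  (⌊latticeDot v m⌋, (m i : ZMod 2), fun j => m j - round ((⌊latticeDot v m⌋ : ℝ) * v j))

theorem eq_of_abs_sub_lt_two_of_cast_eq {a b : ℤ} (hab : |a - b| < 2) (hpar : (a : ZMod 2) = b) :
    a = b := by
  obtain ⟨k, hk⟩ := (ZMod.intCast_eq_intCast_iff_dvd_sub _ _ _).mp hpar.symm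
  rw [abs_lt] at hab
  omega

theorem tubeCode_injective (hvi : 1 / 2 < |v i|) : Function.Injective (tubeCode v i) := by
  intro m m' h
  simp only [tubeCode, Prod.mk.injEq, funext_iff, Subtype.forall] at h
  obtain ⟨hfloor, hpar, hoff⟩ := h
  have hoff' : ∀ j ≠ i, m j = m' j := fun j hj => by
    have := hoff j hj
    rw [hfloor] at this
    omega
  have hslab : |((m i : ℝ) - m' i) * v i| < 1 := by
    rw [← latticeDot_sub_of_forall_ne_eq v i m m' hoff']
    exact Int.abs_sub_lt_one_of_floor_eq_floor hfloor
  have hii : |m i - m' i| < 2 := by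
    have : |((m i - m' i : ℤ) : ℝ)| < 2 := by
      push_cast
      rw [abs_mul] at hslab
      nlinarith [abs_nonneg ((m i : ℝ) - m' i)]
    exact_mod_cast this
  funext j
  by_cases hj : j = i
  · subst hj
    exact eq_of_abs_sub_lt_two_of_cast_eq hii hpar
  · exact hoff' j hj

theorem abs_sub_round_floor_mul_le {x a y R : ℝ} (hy : |y| ≤ 1) (h : |x - a * y| ≤ R) :
    |x - round (⌊a⌋ * y)| ≤ R + 3 / 2 := by
  have hfrac : |(a - ⌊a⌋) * y| ≤ 1 := by
    rw [abs_mul]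
    have : |a - ⌊a⌋| ≤ 1 := by
      rw [abs_le]
      constructor <;> linarith [Int.floor_le a, Int.lt_floor_add_one a]
    nlinarith [abs_nonneg (a - ⌊a⌋), abs_nonneg y]
  calc |x - round (⌊a⌋ * y)|
      = |(x - a * y) + (a - ⌊a⌋) * y + (⌊a⌋ * y - round (⌊a⌋ * y))| := by ring_nf
    _ ≤ |x - a * y| + |(a - ⌊a⌋) * y| + |⌊a⌋ * y - round (⌊a⌋ * y)| := abs_add_three _ _ _
    _ ≤ R + 3 / 2 := by linarith [abs_sub_round ((⌊a⌋ : ℝ) * y)]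

def tubeCodeBox (N R : ℝ) : Finset (ℤ × ZMod 2 × ({j // j ≠ i} → ℤ)) :=
  Icc 0 ⌊N⌋ ×ˢ univ ×ˢ Fintype.piFinset fun _ => Icc (-(⌈R⌉ + 2)) (⌈R⌉ + 2)

theorem mapsTo_tubeCode (hv : ∀ j, |v j| ≤ 1) (N R : ℝ) :
    Set.MapsTo (tubeCode v i) (latticeTube v N R) (tubeCodeBox i N R) := by
  rintro m ⟨h0, hN, hR⟩
  simp only [tubeCode, tubeCodeBox, mem_coe, mem_product, mem_Icc, mem_univ,
    Fintype.mem_piFinset, true_and]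
  refine ⟨⟨Int.floor_nonneg.mpr h0, Int.floor_le_floor hN⟩, fun j => ?_⟩
  have h := abs_sub_round_floor_mul_le (hv j) (hR j)
  have hceil := Int.le_ceil R
  have : |((m j - round ((⌊latticeDot v m⌋ : ℝ) * v j) : ℤ) : ℝ)| < ⌈R⌉ + 2 + 1 := by
    push_cast; linarith
  have hlt : |m j - round ((⌊latticeDot v m⌋ : ℝ) * v j)| < ⌈R⌉ + 2 + 1 := by exact_mod_cast this
  rw [abs_lt] at hlt
  omega

theorem card_tubeCodeBox_le {N R : ℝ} (hN : 0 ≤ N) (hR : 0 ≤ R) :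
    ((tubeCodeBox i N R).card : ℝ) ≤ (N + 1) * 2 * (2 * R + 7) ^ (Fintype.card ι - 1) := by
  have hfloor : (0 : ℤ) ≤ ⌊N⌋ := Int.floor_nonneg.mpr hN
  have hceil : (0 : ℤ) ≤ ⌈R⌉ := Int.ceil_nonneg hR
  have hcard : (tubeCodeBox i N R).card =
      (⌊N⌋ + 1).toNat * (2 * ((2 * ⌈R⌉ + 5).toNat ^ (Fintype.card ι - 1))) := by
    simp only [tubeCodeBox, card_product, Int.card_Icc, card_univ, ZMod.card,
      Fintype.card_piFinset, prod_const, Fintype.card_subtype_compl, Fintype.card_unique]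
    congr 4 <;> omega
  rw [hcard]
  have hslab : ((⌊N⌋ + 1).toNat : ℝ) ≤ N + 1 := by
    rw [← Int.cast_natCast, Int.toNat_of_nonneg (by omega)]
    push_cast
    linarith [Int.floor_le N]
  have hside : ((2 * ⌈R⌉ + 5).toNat : ℝ) ≤ 2 * R + 7 := by
    rw [← Int.cast_natCast, Int.toNat_of_nonneg (by omega)]
    push_cast
    linarith [Int.ceil_lt_add_one R]
  push_cast
  rw [← mul_assoc]
  gcongr

variable {v i}

theorem finite_latticeTube (hvi : 1 / 2 < |v i|) (hv : ∀ j, |v j| ≤ 1) (N R : ℝ) :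
    (latticeTube v N R).Finite :=
  ((tubeCodeBox i N R).finite_toSet.subset (mapsTo_tubeCode v i hv N R).image_subset).of_finite_image
    (tubeCode_injective v i hvi).injOn

theorem ncard_latticeTube_le (hvi : 1 / 2 < |v i|) (hv : ∀ j, |v j| ≤ 1) {N R : ℝ}
    (hN : 0 ≤ N) (hR : 0 ≤ R) :
    ((latticeTube v N R).ncard : ℝ) ≤ (N + 1) * 2 * (2 * R + 7) ^ (Fintype.card ι - 1) := by
  have hle := Set.ncard_le_ncard_of_injOn _ (mapsTo_tubeCode v i hv N R)
    (tubeCode_injective v i hvi).injOn (tubeCodeBox i N R).finite_toSet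
  rw [Set.ncard_coe_finset] at hle
  exact le_trans (by exact_mod_cast hle) (card_tubeCodeBox_le i hN hR)

end

theorem exists_half_lt_abs_of_sum_sq_eq_one {ι : Type*} [Fintype ι] (hι : Fintype.card ι ≤ 3)
    {v : ι → ℝ} (hv : ∑ j, v j ^ 2 = 1) : ∃ i, 1 / 2 < |v i| := by
  by_contra! h
  have hsq : ∀ j, v j ^ 2 ≤ 1 / 4 := fun j => by
    nlinarith [abs_nonneg (v j), sq_abs (v j), h j]
  have : ∑ j, v j ^ 2 ≤ Fintype.card ι * (1 / 4) := by
    simpa using Finset.sum_le_sum fun j (_ : j ∈ univ) => hsq j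
  have : (Fintype.card ι : ℝ) ≤ 3 := by exact_mod_cast hι
  linarith

theorem abs_le_one_of_sum_sq_eq_one {ι : Type*} [Fintype ι] {v : ι → ℝ} (hv : ∑ j, v j ^ 2 = 1)
    (i : ι) : |v i| ≤ 1 := by
  rw [← sq_le_one_iff_abs_le_one, ← hv]
  exact single_le_sum (f := fun j => v j ^ 2) (fun j _ => sq_nonneg _) (mem_univ i)

theorem norm_sub_inner_smul_le_mul_sin {E : Type*} [NormedAddCommGroup E] [InnerProductSpace ℝ E]
    {v x : E} (hv : ‖v‖ = 1) {θ : ℝ} (hθ : θ ∈ Set.Icc 0 (π / 2))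
    (hx : ‖x‖ * cos θ ≤ inner ℝ x v) : ‖x - inner ℝ x v • v‖ ≤ ‖x‖ * sin θ := by
  have hcos : 0 ≤ cos θ := cos_nonneg_of_mem_Icc ⟨by linarith [hθ.1, pi_pos], hθ.2⟩
  have hsin : 0 ≤ sin θ := sin_nonneg_of_nonneg_of_le_pi hθ.1 (by linarith [hθ.2, pi_pos])
  have hsq : ‖x - inner ℝ x v • v‖ ^ 2 = ‖x‖ ^ 2 - inner ℝ x v ^ 2 := by
    rw [norm_sub_sq_real, real_inner_smul_right, norm_smul, hv, Real.norm_eq_abs]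
    ring_nf
    rw [sq_abs]
    ring
  have hcos_sq : (‖x‖ * cos θ) ^ 2 ≤ inner ℝ x v ^ 2 := pow_le_pow_left₀ (by positivity) hx 2
  apply pow_le_pow_iff_left₀ (norm_nonneg _) (by positivity) two_ne_zero |>.mp
  rw [hsq]
  nlinarith [sin_sq_add_cos_sq θ]

theorem mem_latticeTube_of_mem_cone {ι : Type*} [Fintype ι] {v : EuclideanSpace ℝ ι} (hv : ‖v‖ = 1)
    {N θ : ℝ} (hθ : θ ∈ Set.Icc 0 (π / 2)) {m : ι → ℤ}
    (hN : ‖WithLp.toLp 2 (fun j => (m j : ℝ))‖ ≤ N)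
    (hcone : ‖WithLp.toLp 2 (fun j => (m j : ℝ))‖ * cos θ ≤ latticeDot v m) :
    m ∈ latticeTube v N (N * θ) := by
  set x : EuclideanSpace ℝ ι := WithLp.toLp 2 fun j => (m j : ℝ)
  have hdot : latticeDot v m = inner ℝ x v := by
    simp [latticeDot, x, PiLp.inner_apply, mul_comm]
  rw [hdot] at hcone
  simp only [latticeTube, Set.mem_ofPred_eq, hdot]
  have hcos : 0 ≤ cos θ := cos_nonneg_of_mem_Icc ⟨by linarith [hθ.1, pi_pos], hθ.2⟩
  refine ⟨le_trans (by positivity) hcone, ?_, fun j => ?_⟩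
  · calc inner ℝ x v ≤ ‖x‖ * ‖v‖ := real_inner_le_norm x v
      _ ≤ N := by rw [hv, mul_one]; exact hN
  · calc |(m j : ℝ) - inner ℝ x v * v j| = ‖(x - inner ℝ x v • v).ofLp j‖ := by simp [x]
      _ ≤ ‖x - inner ℝ x v • v‖ := PiLp.norm_apply_le _ j
      _ ≤ ‖x‖ * sin θ := norm_sub_inner_smul_le_mul_sin hv hθ hcone
      _ ≤ N * θ := mul_le_mul hN (sin_le hθ.1)
          (sin_nonneg_of_nonneg_of_le_pi hθ.1 (by linarith [hθ.2, pi_pos]))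
          ((norm_nonneg x).trans hN)

theorem enorm'_eq_norm (m : Fin 3 → ℤ) :
    enorm' m = ‖(WithLp.toLp 2 fun j => (m j : ℝ) : EuclideanSpace ℝ (Fin 3))‖ := by
  simp [enorm', EuclideanSpace.norm_eq]

theorem cone_lattice_point_count :
    ∃ C : ℝ, 0 < C ∧
      ∀ v : EuclideanSpace ℝ (Fin 3), ‖v‖ = 1 →
      ∀ N : ℝ, 1 ≤ N → ∀ θ : ℝ, 0 < θ → θ ≤ 1 →
      (Set.ncard {m : Fin 3 → ℤ |
          0 < enorm' m ∧ enorm' m ≤ N ∧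
          enorm' m * Real.cos θ ≤ ∑ i, (m i : ℝ) * v i} : ℝ)
        ≤ C * N * (N * θ + 1) ^ 2 := by
  refine ⟨196, by norm_num, fun v hv N hN θ hθ hθ1 => ?_⟩
  have hv_sq : ∑ j, v j ^ 2 = 1 := by simpa [hv] using (EuclideanSpace.norm_sq_eq v).symm
  obtain ⟨i, hi⟩ := exists_half_lt_abs_of_sum_sq_eq_one (by simp) hv_sq
  have hv_le := abs_le_one_of_sum_sq_eq_one hv_sq
  have hθ' : θ ∈ Set.Icc 0 (π / 2) := ⟨hθ.le, by linarith [pi_gt_three]⟩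
  have hsub : {m : Fin 3 → ℤ | 0 < enorm' m ∧ enorm' m ≤ N ∧
      enorm' m * cos θ ≤ ∑ i, (m i : ℝ) * v i} ⊆ latticeTube v N (N * θ) := by
    rintro m ⟨-, hmN, hmcone⟩
    rw [enorm'_eq_norm] at hmN hmcone
    exact mem_latticeTube_of_mem_cone hv hθ' hmN hmcone
  calc _ ≤ ((latticeTube v N (N * θ)).ncard : ℝ) := by
        exact_mod_cast Set.ncard_le_ncard hsub (finite_latticeTube hi hv_le N (N * θ))
    _ ≤ (N + 1) * 2 * (2 * (N * θ) + 7) ^ (Fintype.card (Fin 3) - 1) :=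
        ncard_latticeTube_le hi hv_le (by linarith) (by positivity)
    _ ≤ 2 * N * 2 * (7 * (N * θ + 1)) ^ 2 := by
        simp only [Fintype.card_fin]
        gcongr <;> nlinarith
    _ = 196 * N * (N * θ + 1) ^ 2 := by ring
end

section
/- For every T > 0 and every σ ∈ [0, 1] there exists a constant C(T) > 0 such that for every real a ≥ 1 and all times t₁, t₁', t₂ with 0 ≤ t₂ ≤ min(t₁, t₁') and max(t₁, t₁') ≤ T: | ∫₀^{t₂} a^{−2} ( sin((t₁ − s)a) − sin((t₁' − s)a) ) sin((t₂ − s)a) ds | ≤ C(T) a^{−2 + σ} |t₁ − t₁'|^σ. -/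
/-!
Since `sin` is `1`-Lipschitz and bounded by `1`, interpolation gives
`|sin x - sin y| ≤ 2 ^ (1 - σ) |x - y| ^ σ`. Applied at frequency `a`, the difference of the two
integrands is at most `2 ^ (1 - σ) a ^ (-2 + σ) |t₁ - t₁'| ^ σ` pointwise, and the interval of
integration has length `t₂ ≤ T`.
-/

open Real

theorem le_rpow_mul_rpow_of_le_of_le {b x M σ : ℝ} (hb : 0 ≤ b) (hbx : b ≤ x) (hbM : b ≤ M)
    (hσ0 : 0 ≤ σ) (hσ1 : σ ≤ 1) : b ≤ M ^ (1 - σ) * x ^ σ :=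
  calc b = b ^ (1 - σ) * b ^ σ := by
        rw [← rpow_add' hb (by norm_num), sub_add_cancel, rpow_one]
    _ ≤ M ^ (1 - σ) * x ^ σ :=
        mul_le_mul (rpow_le_rpow hb hbM (by linarith)) (rpow_le_rpow hb hbx hσ0)
          (rpow_nonneg hb σ) (rpow_nonneg (hb.trans hbM) _)

theorem Real.abs_sin_sub_sin_le_rpow {σ : ℝ} (hσ0 : 0 ≤ σ) (hσ1 : σ ≤ 1) (x y : ℝ) :
    |sin x - sin y| ≤ 2 ^ (1 - σ) * |x - y| ^ σ := by
  have hbounded : |sin x - sin y| ≤ 2 :=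
    calc |sin x - sin y| ≤ |sin x| + |sin y| := abs_sub _ _
      _ ≤ 2 := by linarith [abs_sin_le_one x, abs_sin_le_one y]
  exact le_rpow_mul_rpow_of_le_of_le (abs_nonneg _) (abs_sin_sub_sin_le x y) hbounded hσ0 hσ1

theorem abs_sin_freq_sub_sin_freq_mul_sin_div_sq_le {σ a : ℝ} (hσ0 : 0 ≤ σ) (hσ1 : σ ≤ 1)
    (ha : 0 < a) (t₁ t₁' r : ℝ) (s : ℝ) :
    |(sin ((t₁ - s) * a) - sin ((t₁' - s) * a)) * sin r / a ^ 2|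
      ≤ 2 ^ (1 - σ) * a ^ (-2 + σ) * |t₁ - t₁'| ^ σ := by
  have hdiff := abs_sin_sub_sin_le_rpow hσ0 hσ1 ((t₁ - s) * a) ((t₁' - s) * a)
  have hphase : |(t₁ - s) * a - (t₁' - s) * a| ^ σ = a ^ σ * |t₁ - t₁'| ^ σ := by
    rw [← sub_mul, sub_sub_sub_cancel_right, abs_mul, abs_of_pos ha,
      mul_rpow (abs_nonneg _) ha.le, mul_comm]
  have hscale : a ^ (-2 + σ) = a ^ σ / a ^ 2 := by
    rw [rpow_add ha, rpow_neg ha.le, rpow_two, div_eq_inv_mul]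
  calc |(sin ((t₁ - s) * a) - sin ((t₁' - s) * a)) * sin r / a ^ 2|
      = |sin ((t₁ - s) * a) - sin ((t₁' - s) * a)| * |sin r| / a ^ 2 := by
        rw [abs_div, abs_mul, abs_of_pos (by positivity : (0 : ℝ) < a ^ 2)]
    _ ≤ 2 ^ (1 - σ) * (a ^ σ * |t₁ - t₁'| ^ σ) * 1 / a ^ 2 := by
        rw [← hphase]; gcongr; exact abs_sin_le_one r
    _ = 2 ^ (1 - σ) * a ^ (-2 + σ) * |t₁ - t₁'| ^ σ := by
        rw [hscale]; ring

theorem correlation_kernel_holder_in_time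
    (T : ℝ) (hT : 0 < T) (σ : ℝ) (hσ0 : 0 ≤ σ) (hσ1 : σ ≤ 1) :
    ∃ C : ℝ, 0 < C ∧ ∀ a : ℝ, 1 ≤ a → ∀ t₁ t₁' t₂ : ℝ,
      0 ≤ t₂ → t₂ ≤ min t₁ t₁' → max t₁ t₁' ≤ T →
      |∫ s in (0:ℝ)..t₂,
          (Real.sin ((t₁ - s) * a) - Real.sin ((t₁' - s) * a)) *
            Real.sin ((t₂ - s) * a) / a ^ 2|
        ≤ C * a ^ (-2 + σ) * |t₁ - t₁'| ^ σ := by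
  refine ⟨2 ^ (1 - σ) * T, by positivity, fun a ha t₁ t₁' t₂ ht₂ hmin hmax => ?_⟩
  have hlength : |t₂ - 0| ≤ T := by
    rw [sub_zero, abs_of_nonneg ht₂]
    exact hmin.trans (min_le_max.trans hmax)
  calc _ ≤ 2 ^ (1 - σ) * a ^ (-2 + σ) * |t₁ - t₁'| ^ σ * |t₂ - 0| := by
        rw [← norm_eq_abs]
        exact intervalIntegral.norm_integral_le_of_norm_le_const fun s _ =>
          abs_sin_freq_sub_sin_freq_mul_sin_div_sq_le hσ0 hσ1 (one_pos.trans_le ha) t₁ t₁' _ s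
    _ ≤ 2 ^ (1 - σ) * a ^ (-2 + σ) * |t₁ - t₁'| ^ σ * T := by gcongr
    _ = 2 ^ (1 - σ) * T * a ^ (-2 + σ) * |t₁ - t₁'| ^ σ := by ring
end
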